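/- arXiv:1804.09594 — 6 statements merged into one kernel-verified Lean document; each statement's English description precedes it below -/
import Mathlib

section
/- The sequence V(1,2), defined greedily by starting with 1, 2 and repeatedly appending the smallest integer greater than all previous terms that can be written as a sum of two (not necessarily distinct) earlier terms in exactly one way, equals {2} together with all positive odd numbers. -/
/-!
By strong induction, membership in `V(1,2)` agrees with "`m = 2` or `m` odd" below `m`, so
whether `m` belongs is decided by counting its representations as sums of such numbers. An odd
sum has one even summand, which must be `2`, so an odd `m ≥ 3` has the single representation
`2 + (m - 2)` (`1 + 2` for `m = 3`); an even `m ≥ 4` has the two representations `1 + (m - 1)`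
and `3 + (m - 3)` (`2 + 2` for `m = 4`).
-/

/-- Membership in the V-sequence generated by `a` and `b`: a number is in the
sequence iff it is a generator or it has exactly one representation as an
unordered sum `x + y` of two (not necessarily distinct) smaller elements of
the sequence. -/
def VMem (a b : ℕ) : ℕ → Prop := fun m =>
  Nat.strongRecOn (motive := fun _ => Prop) m (fun m ih =>
    m = a ∨ m = b ∨
      ∃! p : ℕ × ℕ, ∃ h1 : p.1 < m, ∃ h2 : p.2 < m,
        p.1 ≤ p.2 ∧ ih p.1 h1 ∧ ih p.2 h2 ∧ p.1 + p.2 = m)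

def IsSumRep (P : ℕ → Prop) (m : ℕ) (p : ℕ × ℕ) : Prop :=
  p.1 < m ∧ p.2 < m ∧ p.1 ≤ p.2 ∧ P p.1 ∧ P p.2 ∧ p.1 + p.2 = m

def HasUniqueSumRep (P : ℕ → Prop) (m : ℕ) : Prop :=
  ∃! p : ℕ × ℕ, IsSumRep P m p

theorem vMem_iff (a b m : ℕ) :
    VMem a b m ↔ m = a ∨ m = b ∨ HasUniqueSumRep (VMem a b) m := by
  show Nat.strongRecOn (motive := fun _ => Prop) m _ ↔ _
  rw [Nat.strongRecOn_eq]
  simp only [HasUniqueSumRep, IsSumRep, exists_prop]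
  rfl

theorem hasUniqueSumRep_congr {P Q : ℕ → Prop} {m : ℕ} (h : ∀ k < m, P k ↔ Q k) :
    HasUniqueSumRep P m ↔ HasUniqueSumRep Q m := by
  refine existsUnique_congr fun ⟨x, y⟩ => ?_
  simp only [IsSumRep]
  constructor
  · rintro ⟨hx, hy, hxy, hPx, hPy, hs⟩
    exact ⟨hx, hy, hxy, (h x hx).1 hPx, (h y hy).1 hPy, hs⟩
  · rintro ⟨hx, hy, hxy, hQx, hQy, hs⟩
    exact ⟨hx, hy, hxy, (h x hx).2 hQx, (h y hy).2 hQy, hs⟩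

theorem isSumRep_twoOrOdd_iff {m x y : ℕ} :
    IsSumRep (fun k => k = 2 ∨ Odd k) m (x, y) ↔
      x < m ∧ y < m ∧ x ≤ y ∧ (x = 2 ∨ x % 2 = 1) ∧ (y = 2 ∨ y % 2 = 1) ∧ x + y = m := by
  simp only [IsSumRep, Nat.odd_iff]

theorem hasUniqueSumRep_twoOrOdd_of_odd {m : ℕ} (hm : Odd m) (h3 : 3 ≤ m) :
    HasUniqueSumRep (fun k => k = 2 ∨ Odd k) m := by
  rw [Nat.odd_iff] at hm
  have hrep : IsSumRep (fun k => k = 2 ∨ Odd k) m (if m = 3 then (1, 2) else (2, m - 2)) := by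
    split_ifs <;> rw [isSumRep_twoOrOdd_iff] <;> omega
  refine ⟨_, hrep, fun ⟨x, y⟩ hp => ?_⟩
  have := isSumRep_twoOrOdd_iff.1 hp
  split_ifs <;> simp only [Prod.mk.injEq] <;> omega

theorem not_hasUniqueSumRep_twoOrOdd_of_even {m : ℕ} (hm : Even m) (h2 : m ≠ 2) :
    ¬ HasUniqueSumRep (fun k => k = 2 ∨ Odd k) m := by
  rw [Nat.even_iff] at hm
  rintro ⟨⟨x, y⟩, hp, huniq⟩
  have h4 : 4 ≤ m := by
    have := isSumRep_twoOrOdd_iff.1 hp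
    omega
  have hrep1 : IsSumRep (fun k => k = 2 ∨ Odd k) m (1, m - 1) := by
    rw [isSumRep_twoOrOdd_iff]
    omega
  have hrep2 : IsSumRep (fun k => k = 2 ∨ Odd k) m (if m = 4 then (2, 2) else (3, m - 3)) := by
    split_ifs <;> rw [isSumRep_twoOrOdd_iff] <;> omega
  have h := congrArg Prod.fst ((huniq _ hrep1).trans (huniq _ hrep2).symm)
  split_ifs at h <;> simp at h

theorem hasUniqueSumRep_twoOrOdd_iff {m : ℕ} (h1 : m ≠ 1) (h2 : m ≠ 2) :
    HasUniqueSumRep (fun k => k = 2 ∨ Odd k) m ↔ Odd m := by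
  rcases Nat.even_or_odd m with hm | hm
  · exact iff_of_false (not_hasUniqueSumRep_twoOrOdd_of_even hm h2) (Nat.not_odd_iff_even.2 hm)
  · have h3 : 3 ≤ m := by
      rw [Nat.odd_iff] at hm
      omega
    exact iff_of_true (hasUniqueSumRep_twoOrOdd_of_odd hm h3) hm

theorem vMem_one_two_iff (m : ℕ) : VMem 1 2 m ↔ m = 2 ∨ Odd m := by
  induction m using Nat.strong_induction_on with
  | _ m ih =>
  rw [vMem_iff, hasUniqueSumRep_congr ih]
  by_cases h1 : m = 1
  · simp [h1]
  by_cases h2 : m = 2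
  · simp [h2]
  simp only [h1, h2, false_or, hasUniqueSumRep_twoOrOdd_iff h1 h2]

/-- V(1,2) equals {2} together with all positive odd numbers. -/
theorem stmt_0 : {m : ℕ | VMem 1 2 m} = {m : ℕ | m = 2 ∨ Odd m} :=
  Set.ext vMem_one_two_iff
end

section
/- No V-sequence can contain all even numbers 2c, 2c+2, 2c+4, ... from some point 2c onward: if a set S closed under the V-sequence rule contains 2c+2n for all n ≥ 0, then 4c+4 has at least two representations (2c+2)+(2c+2) and (2c+4)+2c as sums of two elements of S, hence cannot belong to the V-sequence. -/
/-- If a set `S` contains all even numbers `2c, 2c+2, 2c+4, ...`, then `4c+4`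
has at least two representations as an unordered sum of two smaller elements of
`S` (namely `(2c+2)+(2c+2)` and `(2c+4)+2c`), hence `4c+4` fails the
unique-representation condition of the V-sequence rule. -/
theorem stmt_2 (S : Set ℕ) (c : ℕ) (hc : 0 < c) (hS : ∀ n : ℕ, 2 * c + 2 * n ∈ S) :
    ¬ ∃! p : ℕ × ℕ, p.1 ≤ p.2 ∧ p.1 < 4 * c + 4 ∧ p.2 < 4 * c + 4 ∧
      p.1 ∈ S ∧ p.2 ∈ S ∧ p.1 + p.2 = 4 * c + 4 := by
  rintro ⟨p, _, hu⟩
  have h0 := hS 0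
  have h1 := hS 1
  have h2 := hS 2
  have e1 : p = (2 * c, 2 * c + 4) := by
    symm; apply hu
    refine ⟨by omega, by omega, by omega, by simpa using h0, by simpa using h2, by omega⟩
  have e2 : p = (2 * c + 2, 2 * c + 2) := by
    symm; apply hu
    refine ⟨by omega, by omega, by omega, by simpa using h1, by simpa using h1, by omega⟩
  rw [e1] at e2
  simp [Prod.ext_iff] at e2
end

section
/- Let a < b be relatively prime positive integers with a ≥ 2, and let U = U(a,b) be the Ulam sequence. Then ka ∉ U for all 2 ≤ k ≤ b, and lb ∉ U for all 2 ≤ l ≤ a. -/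
/-- Membership in the Ulam sequence generated by `a` and `b`: a number is in the
sequence iff it is a generator or it has exactly one representation as an
unordered sum `x + y` of two DISTINCT smaller elements of the sequence. -/
def UMem (a b : ℕ) : ℕ → Prop := fun m =>
  Nat.strongRecOn (motive := fun _ => Prop) m (fun m ih =>
    m = a ∨ m = b ∨
      ∃! p : ℕ × ℕ, ∃ h1 : p.1 < m, ∃ h2 : p.2 < m,
        p.1 < p.2 ∧ ih p.1 h1 ∧ ih p.2 h2 ∧ p.1 + p.2 = m)

theorem UMem_iff (a b m : ℕ) : UMem a b m ↔
    (m = a ∨ m = b ∨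
      ∃! p : ℕ × ℕ, ∃ _h1 : p.1 < m, ∃ _h2 : p.2 < m,
        p.1 < p.2 ∧ UMem a b p.1 ∧ UMem a b p.2 ∧ p.1 + p.2 = m) := by
  show Nat.strongRecOn (motive := fun _ => Prop) m _ ↔ _
  rw [Nat.strongRecOn]
  rw [WellFounded.fix_eq]
  rfl

/-- Every member of the Ulam set is `a`, `b`, or a combination `αa + βb`
with `α, β ≥ 1`. -/
theorem UMem_shape (a b : ℕ) (hab : a < b) :
    ∀ m, UMem a b m → m = a ∨ m = b ∨ ∃ α β, 1 ≤ α ∧ 1 ≤ β ∧ m = α * a + β * b := by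
  intro m
  induction m using Nat.strong_induction_on with
  | _ m ih =>
    intro hm
    rw [UMem_iff] at hm
    rcases hm with h | h | h
    · exact Or.inl h
    · exact Or.inr (Or.inl h)
    · obtain ⟨⟨x, y⟩, ⟨h1, h2, hxy, hux, huy, hsum⟩, -⟩ := h
      simp only at h1 h2 hxy hsum
      right; right
      rcases ih x h1 hux with hx | hx | ⟨α1, β1, hα1, hβ1, hx⟩ <;>
        rcases ih y h2 huy with hy | hy | ⟨α2, β2, hα2, hβ2, hy⟩
      · omega
      · exact ⟨1, 1, le_refl _, le_refl _, by omega⟩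
      · exact ⟨α2 + 1, β2, by omega, hβ2, by subst hx hy; ring_nf; omega⟩
      · omega
      · omega
      · exact ⟨α2, β2 + 1, hα2, by omega, by subst hy hx; ring_nf; omega⟩
      · exact ⟨α1 + 1, β1, by omega, hβ1, by subst hx hy; ring_nf; omega⟩
      · exact ⟨α1, β1 + 1, hα1, by omega, by subst hx hy; ring_nf; omega⟩
      · exact ⟨α1 + α2, β1 + β2, by omega, by omega, by subst hx hy; ring_nf; omega⟩

/-- For coprime 2 ≤ a < b, no proper multiple ka (2 ≤ k ≤ b) and no proper
multiple lb (2 ≤ l ≤ a) lies in the Ulam sequence U(a,b). -/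
theorem stmt_15 (a b : ℕ) (ha : 2 ≤ a) (hab : a < b) (hcop : Nat.Coprime a b) :
    (∀ k : ℕ, 2 ≤ k → k ≤ b → ¬ UMem a b (k * a)) ∧
    (∀ l : ℕ, 2 ≤ l → l ≤ a → ¬ UMem a b (l * b)) := by
  constructor
  · intro k hk2 hkb hmem
    rcases UMem_shape a b hab _ hmem with h | h | ⟨α, β, hα, hβ, h⟩
    · -- k * a = a
      have : k = 1 := by
        have ha0 : 0 < a := by omega
        nlinarith
      omega
    · -- k * a = b, so a ∣ b
      have hd : a ∣ b := ⟨k, by rw [← h, Nat.mul_comm]⟩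
      have : a = 1 := Nat.eq_one_of_dvd_one (hcop ▸ Nat.dvd_gcd dvd_rfl hd)
      omega
    · -- k * a = α a + β b with α, β ≥ 1
      have hd : a ∣ β * b := by
        have : β * b = k * a - α * a := by omega
        rw [this]
        exact Nat.dvd_sub ⟨k, by ring⟩ ⟨α, by ring⟩
      have hβa : a ∣ β := hcop.dvd_of_dvd_mul_right hd
      have : a ≤ β := Nat.le_of_dvd (by omega) hβa
      -- then αa + βb ≥ a + ab > ab ≥ ka
      have h1 : k * a ≤ b * a := Nat.mul_le_mul_right a hkb
      have h2 : a * b ≤ β * b := Nat.mul_le_mul_right b this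
      nlinarith
  · intro l hl2 hla hmem
    rcases UMem_shape a b hab _ hmem with h | h | ⟨α, β, hα, hβ, h⟩
    · -- l * b = a : but l*b ≥ 2b > a
      nlinarith
    · have : l = 1 := by
        have hb0 : 0 < b := by omega
        nlinarith
      omega
    · have hd : b ∣ α * a := by
        have : α * a = l * b - β * b := by omega
        rw [this]
        exact Nat.dvd_sub ⟨l, by ring⟩ ⟨β, by ring⟩
      have hαb : b ∣ α := (Nat.coprime_comm.mp hcop).dvd_of_dvd_mul_right hd
      have : b ≤ α := Nat.le_of_dvd (by omega) hαb
      have h1 : l * b ≤ a * b := Nat.mul_le_mul_right b hla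
      have h2 : b * a ≤ α * a := Nat.mul_le_mul_right a this
      nlinarith
end

section
/- Let a < b be relatively prime positive integers. Then a(b+1) and b(a+1) are both elements of the Ulam sequence U(a,b). -/
lemma UMem_eq (a b m : ℕ) : UMem a b m = (m = a ∨ m = b ∨
    ∃! p : ℕ × ℕ, ∃ _h1 : p.1 < m, ∃ _h2 : p.2 < m,
      p.1 < p.2 ∧ UMem a b p.1 ∧ UMem a b p.2 ∧ p.1 + p.2 = m) := by
  show Nat.strongRecOn (motive := fun _ => Prop) m _ = _
  rw [Nat.strongRecOn_eq]
  rfl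

namespace Stmt16Aux

/-- Admissible exponent pairs. -/
def Pt (α β : ℕ) : Prop :=
  α = 1 ∨ β = 1 ∨ (3 ≤ α ∧ 3 ≤ β ∧ α % 2 = 1 ∧ β % 2 = 1)

/-- Explicit description of the initial segment of the Ulam set. -/
def SS (a b m : ℕ) : Prop := ∃ α β : ℕ, Pt α β ∧ m = α * a + β * b

/-- `Rep a b m p`: `p` is an ordered representation of `m` by `SS`-elements. -/
def RepS (a b m : ℕ) (p : ℕ × ℕ) : Prop :=
  ∃ _h1 : p.1 < m, ∃ _h2 : p.2 < m,
    p.1 < p.2 ∧ SS a b p.1 ∧ SS a b p.2 ∧ p.1 + p.2 = m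

section Arith

variable {a b : ℕ}

lemma val_pos (ha : 0 < a) (hb : 0 < b) {α β : ℕ} (h : Pt α β) :
    0 < α * a + β * b := by
  have h1 : 1 ≤ α ∨ 1 ≤ β := by
    rcases h with h | h | ⟨h, h', _⟩ <;> omega
  rcases h1 with h1 | h1
  · have h2 : a ≤ α * a := Nat.le_mul_of_pos_left a (by omega)
    exact lt_of_lt_of_le ha (le_trans h2 (Nat.le_add_right _ _))
  · have h2 : b ≤ β * b := Nat.le_mul_of_pos_left b (by omega)
    exact lt_of_lt_of_le hb (le_trans h2 (Nat.le_add_left _ _))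

lemma beta_le (ha : 0 < a) {α β : ℕ} (hPt : Pt α β)
    (hm : α * a + β * b ≤ a * b + b) : β ≤ a := by
  by_contra hc
  push_neg at hc
  have h1 : (a + 1) * b ≤ β * b := Nat.mul_le_mul_right _ (by omega)
  have h2 : (a + 1) * b = a * b + b := by ring
  have h3 : α * a = 0 := by omega
  have h4 : α = 0 := by
    rcases Nat.mul_eq_zero.mp h3 with h | h
    · exact h
    · omega
  subst h4
  have h5 : β = 1 := by
    rcases hPt with h | h | ⟨h, _⟩ <;> omega
  omega

lemma alpha_le (ha : 0 < a) (hab : a < b) {α β : ℕ} (hPt : Pt α β)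
    (hm : α * a + β * b ≤ a * b + b) : α ≤ b := by
  by_contra hc
  push_neg at hc
  have h1 : (b + 1) * a ≤ α * a := Nat.mul_le_mul_right _ (by omega)
  have h2 : (b + 1) * a = a * b + a := by ring
  have h3 : β * b ≤ b - a := by omega
  have h4 : β = 0 := by
    by_contra hb0
    have : b ≤ β * b := Nat.le_mul_of_pos_left b (by omega)
    omega
  subst h4
  have h5 : α = 1 := by
    rcases hPt with h | h | ⟨h, h', _⟩ <;> omega
  omega

lemma dec_aux (hb : 0 < b) (hcop : Nat.Coprime a b) {A B C D : ℕ}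
    (hle : C ≤ A) (h : A * a + B * b = C * a + D * b) :
    ∃ t, A = C + t * b ∧ D = B + t * a := by
  obtain ⟨k, rfl⟩ := Nat.exists_eq_add_of_le hle
  have h2 : k * a + B * b = D * b := by
    have hexp : (C + k) * a = C * a + k * a := by ring
    rw [hexp] at h
    omega
  have hBD : B ≤ D := by
    have : B * b ≤ D * b := by omega
    exact Nat.le_of_mul_le_mul_right this hb
  obtain ⟨d, rfl⟩ := Nat.exists_eq_add_of_le hBD
  have h3 : k * a = d * b := by
    have hexp : (B + d) * b = B * b + d * b := by ring
    rw [hexp] at h2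
    omega
  have hdvd : b ∣ k := by
    have hdvd1 : b ∣ k * a := ⟨d, by rw [h3]; ring⟩
    exact (Nat.Coprime.dvd_of_dvd_mul_right hcop.symm hdvd1)
  obtain ⟨t, rfl⟩ := hdvd
  refine ⟨t, by ring, ?_⟩
  have h4 : d * b = t * a * b := by
    rw [← h3]; ring
  have h5 : d = t * a := Nat.eq_of_mul_eq_mul_right hb h4
  omega

lemma dec (hb : 0 < b) (hcop : Nat.Coprime a b) {A B C D : ℕ}
    (h : A * a + B * b = C * a + D * b) :
    ∃ t, (A = C + t * b ∧ D = B + t * a) ∨ (C = A + t * b ∧ B = D + t * a) := by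
  rcases le_total C A with hle | hle
  · obtain ⟨t, h1, h2⟩ := dec_aux hb hcop hle h
    exact ⟨t, Or.inl ⟨h1, h2⟩⟩
  · obtain ⟨t, h1, h2⟩ := dec_aux hb hcop hle h.symm
    exact ⟨t, Or.inr ⟨h1, h2⟩⟩

/-- Injectivity of admissible representations in the range `[0, ab+b]`. -/
lemma inj (ha : 0 < a) (hab : a < b) (hcop : Nat.Coprime a b) {α β γ δ : ℕ}
    (hm : α * a + β * b ≤ a * b + b) (h1 : Pt α β) (h2 : Pt γ δ)
    (heq : α * a + β * b = γ * a + δ * b) : α = γ ∧ β = δ := by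
  have hb : 0 < b := by omega
  have hm2 : γ * a + δ * b ≤ a * b + b := by omega
  obtain ⟨t, ht | ht⟩ := dec hb hcop heq
  · rcases Nat.eq_zero_or_pos t with rfl | htpos
    · constructor <;> omega
    · exfalso
      obtain ⟨hta, htb⟩ := ht
      have hαb : α ≤ b := alpha_le ha hab h1 hm
      have htb' : b ≤ t * b := Nat.le_mul_of_pos_left b htpos
      have hγ : γ = 0 := by omega
      subst hγ
      have hδ : δ = 1 := by rcases h2 with h | h | ⟨h, _⟩ <;> omega
      have hta' : a ≤ t * a := Nat.le_mul_of_pos_left a htpos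
      -- δ = β + t*a = 1, so a = 1, t = 1, β = 0
      have hβ0 : β = 0 := by omega
      have hα1 : α = 1 := by rcases h1 with h | h | ⟨h, h', _⟩ <;> omega
      omega
  · rcases Nat.eq_zero_or_pos t with rfl | htpos
    · constructor <;> omega
    · exfalso
      obtain ⟨hta, htb⟩ := ht
      have hγb : γ ≤ b := alpha_le ha hab h2 hm2
      have htb' : b ≤ t * b := Nat.le_mul_of_pos_left b htpos
      have hα : α = 0 := by omega
      subst hα
      have hδ : β = 1 := by rcases h1 with h | h | ⟨h, _⟩ <;> omega
      have hta' : a ≤ t * a := Nat.le_mul_of_pos_left a htpos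
      have hδ0 : δ = 0 := by omega
      have hγ1 : γ = 1 := by rcases h2 with h | h | ⟨h, h', _⟩ <;> omega
      omega

/-- If `(A, B)` is any nonnegative decomposition of an admissible value with
both coordinates nonzero, then it coincides with the admissible pair. -/
lemma ABeq (ha : 0 < a) (hab : a < b) (hcop : Nat.Coprime a b) {A B α β : ℕ}
    (hPt : Pt α β) (hval : A * a + B * b = α * a + β * b)
    (hm : α * a + β * b ≤ a * b + b) (hA : A ≠ 0) (hB : B ≠ 0) :
    A = α ∧ B = β := by
  have hb : 0 < b := by omega
  obtain ⟨t, ht | ht⟩ := dec hb hcop hval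
  · rcases Nat.eq_zero_or_pos t with rfl | htpos
    · constructor <;> omega
    · exfalso
      obtain ⟨hta, htb⟩ := ht
      have hβa : β ≤ a := beta_le ha hPt hm
      have hta' : a ≤ t * a := Nat.le_mul_of_pos_left a htpos
      omega
  · rcases Nat.eq_zero_or_pos t with rfl | htpos
    · constructor <;> omega
    · exfalso
      obtain ⟨hta, htb⟩ := ht
      have hαb : α ≤ b := alpha_le ha hab hPt hm
      have htb' : b ≤ t * b := Nat.le_mul_of_pos_left b htpos
      omega

end Arith

section Uniq

variable {a b : ℕ}

set_option maxHeartbeats 2000000 in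
/-- Point-level uniqueness of representations of an admissible element. -/
lemma pts_eq (ha : 0 < a) (hab : a < b) (hcop : Nat.Coprime a b)
    {α β α1 β1 α2 β2 : ℕ} (hPt : Pt α β) (hP1 : Pt α1 β1) (hP2 : Pt α2 β2)
    (hne : ¬(α1 = α2 ∧ β1 = β2))
    (hsum : (α1 + α2) * a + (β1 + β2) * b = α * a + β * b)
    (hm : α * a + β * b ≤ a * b + b)
    (hma : ¬(α = 1 ∧ β = 0)) (hmb : ¬(α = 0 ∧ β = 1)) :
    (α1 = 1 ∧ β1 = β - 1 ∧ α2 = α - 1 ∧ β2 = 1) ∨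
      (α1 = α - 1 ∧ β1 = 1 ∧ α2 = 1 ∧ β2 = β - 1) := by
  have hA : α1 + α2 ≠ 0 := by
    intro h0
    have hα1 : α1 = 0 := by omega
    have hα2 : α2 = 0 := by omega
    have e1 : β1 = 1 := by subst hα1; rcases hP1 with h | h | ⟨h, _⟩ <;> omega
    have e2 : β2 = 1 := by subst hα2; rcases hP2 with h | h | ⟨h, _⟩ <;> omega
    exact hne ⟨by omega, by omega⟩
  have hB : β1 + β2 ≠ 0 := by
    intro h0
    have hβ1 : β1 = 0 := by omega
    have hβ2 : β2 = 0 := by omega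
    have e1 : α1 = 1 := by subst hβ1; rcases hP1 with h | h | ⟨_, h, _⟩ <;> omega
    have e2 : α2 = 1 := by subst hβ2; rcases hP2 with h | h | ⟨_, h, _⟩ <;> omega
    exact hne ⟨by omega, by omega⟩
  obtain ⟨hAeq, hBeq⟩ := ABeq ha hab hcop hPt hsum hm hA hB
  simp only [Pt] at hPt hP1 hP2
  omega

/-- H1: each non-generator member of `SS` has a unique ordered representation. -/
lemma exists_unique_rep (ha : 0 < a) (hab : a < b) (hcop : Nat.Coprime a b)
    {m α β : ℕ} (hm : m ≤ a * b + b) (hPt : Pt α β) (hval : m = α * a + β * b)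
    (hma : ¬(α = 1 ∧ β = 0)) (hmb : ¬(α = 0 ∧ β = 1)) :
    ∃! p : ℕ × ℕ, RepS a b m p := by
  have hb : 0 < b := by omega
  -- α ≥ 1 and β ≥ 1
  have hα1 : 1 ≤ α := by
    by_contra h0
    have hα : α = 0 := by omega
    subst hα
    have : β = 1 := by rcases hPt with h | h | ⟨h, _⟩ <;> omega
    exact hmb ⟨rfl, this⟩
  have hβ1 : 1 ≤ β := by
    by_contra h0
    have hβ : β = 0 := by omega
    subst hβ
    have : α = 1 := by rcases hPt with h | h | ⟨_, h, _⟩ <;> omega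
    exact hma ⟨this, rfl⟩
  obtain ⟨α', rfl⟩ := Nat.exists_eq_add_of_le hα1
  obtain ⟨β', rfl⟩ := Nat.exists_eq_add_of_le hβ1
  -- canonical representation values
  set u := 1 * a + β' * b with hu
  set v := α' * a + 1 * b with hv
  have hPu : Pt 1 β' := Or.inl rfl
  have hPv : Pt α' 1 := Or.inr (Or.inl rfl)
  have huv : u + v = m := by rw [hval, hu, hv]; ring
  have hupos : 0 < u := val_pos ha hb hPu
  have hvpos : 0 < v := val_pos ha hb hPv
  have hum : u < m := by omega
  have hvm : v < m := by omega
  have hune : u ≠ v := by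
    intro h
    obtain ⟨e1, e2⟩ := inj ha hab hcop (by omega) hPu hPv h
    -- α' = 1, β' = 1, so (α, β) = (2, 2), contradicting Pt
    rcases hPt with h | h | ⟨h3, h3', hodd, _⟩ <;> omega
  have hSu : SS a b u := ⟨1, β', hPu, rfl⟩
  have hSv : SS a b v := ⟨α', 1, hPv, rfl⟩
  -- the uniqueness engine
  have key : ∀ q : ℕ × ℕ, RepS a b m q → (q.1 = u ∧ q.2 = v) ∨ (q.1 = v ∧ q.2 = u) := by
    rintro ⟨x, y⟩ ⟨h1, h2, hlt, ⟨γ1, δ1, hQ1, rfl⟩, ⟨γ2, δ2, hQ2, rfl⟩, hsum⟩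
    simp only at h1 h2 hlt hsum ⊢
    have hqne : ¬(γ1 = γ2 ∧ δ1 = δ2) := by
      rintro ⟨rfl, rfl⟩; exact absurd rfl hlt.ne
    have hsum' : (γ1 + γ2) * a + (δ1 + δ2) * b = (1 + α') * a + (1 + β') * b := by
      have expand : (γ1 + γ2) * a + (δ1 + δ2) * b
          = (γ1 * a + δ1 * b) + (γ2 * a + δ2 * b) := by ring
      rw [expand, hsum, hval]
    rcases pts_eq ha hab hcop hPt hQ1 hQ2 hqne hsum' (hval ▸ hm) hma hmb with
      ⟨e1, e2, e3, e4⟩ | ⟨e1, e2, e3, e4⟩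
    · have f1 : γ1 = 1 := by omega
      have f2 : δ1 = β' := by omega
      have f3 : γ2 = α' := by omega
      have f4 : δ2 = 1 := by omega
      exact Or.inl ⟨by rw [hu, f1, f2], by rw [hv, f3, f4]⟩
    · have f1 : γ1 = α' := by omega
      have f2 : δ1 = 1 := by omega
      have f3 : γ2 = 1 := by omega
      have f4 : δ2 = β' := by omega
      exact Or.inr ⟨by rw [hv, f1, f2], by rw [hu, f3, f4]⟩
  rcases hune.lt_or_gt with hlt | hlt
  · refine ⟨(u, v), ⟨hum, hvm, hlt, hSu, hSv, huv⟩, ?_⟩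
    rintro ⟨x, y⟩ hq
    have hord : x < y := by
      obtain ⟨_, _, h, _⟩ := hq
      exact h
    rcases key (x, y) hq with ⟨e1, e2⟩ | ⟨e1, e2⟩
    · simp only at e1 e2; rw [e1, e2]
    · simp only at e1 e2; omega
  · refine ⟨(v, u), ⟨hvm, hum, hlt, hSv, hSu, by omega⟩, ?_⟩
    rintro ⟨x, y⟩ hq
    have hord : x < y := by
      obtain ⟨_, _, h, _⟩ := hq
      exact h
    rcases key (x, y) hq with ⟨e1, e2⟩ | ⟨e1, e2⟩
    · simp only at e1 e2; omega
    · simp only at e1 e2; rw [e1, e2]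

end Uniq

section Second

variable {a b : ℕ}

set_option maxHeartbeats 1000000 in
/-- H2 combinatorial core: if two distinct admissible points sum to a
non-admissible exponent pair, there is a second representation, where the
first listed point differs from both original points. -/
lemma case_core {α1 β1 α2 β2 : ℕ} (hP1 : Pt α1 β1) (hP2 : Pt α2 β2)
    (hne : ¬(α1 = α2 ∧ β1 = β2)) (hnP : ¬ Pt (α1 + α2) (β1 + β2))
    (K : ∀ γ1 δ1 γ2 δ2 : ℕ, Pt γ1 δ1 → Pt γ2 δ2 → ¬(γ1 = γ2 ∧ δ1 = δ2) →
      γ1 + γ2 = α1 + α2 → δ1 + δ2 = β1 + β2 →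
      ¬(γ1 = α1 ∧ δ1 = β1) → ¬(γ1 = α2 ∧ δ1 = β2) → False) : False := by
  simp only [Pt] at hnP
  have s1 : α1 = 1 ∨ (β1 = 1 ∧ α1 ≠ 1) ∨
      (3 ≤ α1 ∧ 3 ≤ β1 ∧ α1 % 2 = 1 ∧ β1 % 2 = 1) := by
    simp only [Pt] at hP1; omega
  have s2 : α2 = 1 ∨ (β2 = 1 ∧ α2 ≠ 1) ∨
      (3 ≤ α2 ∧ 3 ≤ β2 ∧ α2 % 2 = 1 ∧ β2 % 2 = 1) := by
    simp only [Pt] at hP2; omega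
  rcases s1 with s1 | s1 | s1 <;> rcases s2 with s2 | s2 | s2
  -- (A,A)
  · by_cases hB2 : β1 + β2 = 2
    · apply K 0 1 (α1 + α2) (β1 + β2 - 1) <;>
        first | omega | (simp [Pt]; omega) | (simp [Pt])
    · by_cases h0 : β1 = 0 ∨ β2 = 0
      · apply K 1 1 (α1 + α2 - 1) (β1 + β2 - 1) <;>
          first | omega | (simp [Pt]; omega) | (simp [Pt])
      · apply K 1 0 (α1 + α2 - 1) (β1 + β2) <;>
          first | omega | (simp [Pt]; omega) | (simp [Pt])
  -- (A,B)
  · by_cases hB2 : β1 + β2 = 2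
    · apply K 0 1 (α1 + α2) (β1 + β2 - 1) <;>
        first | omega | (simp [Pt]; omega) | (simp [Pt])
    · by_cases hA2 : (α1 + α2) % 2 = 1
      · apply K 0 1 (α1 + α2) (β1 + β2 - 1) <;>
          first | omega | (simp [Pt]; omega) | (simp [Pt])
      · by_cases hBodd : (β1 + β2) % 2 = 1
        · apply K 1 0 (α1 + α2 - 1) (β1 + β2) <;>
            first | omega | (simp [Pt]; omega) | (simp [Pt])
        · apply K 1 1 (α1 + α2 - 1) (β1 + β2 - 1) <;>
            first | omega | (simp [Pt]; omega) | (simp [Pt])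
  -- (A,C)
  · apply K (α1 + α2 - 1) 1 1 (β1 + β2 - 1) <;>
      first | omega | (simp [Pt]; omega) | (simp [Pt])
  -- (B,A)
  · by_cases hB2 : β1 + β2 = 2
    · apply K 0 1 (α1 + α2) (β1 + β2 - 1) <;>
        first | omega | (simp [Pt]; omega) | (simp [Pt])
    · by_cases hA2 : (α1 + α2) % 2 = 1
      · apply K 0 1 (α1 + α2) (β1 + β2 - 1) <;>
          first | omega | (simp [Pt]; omega) | (simp [Pt])
      · by_cases hBodd : (β1 + β2) % 2 = 1
        · apply K 1 0 (α1 + α2 - 1) (β1 + β2) <;>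
            first | omega | (simp [Pt]; omega) | (simp [Pt])
        · apply K 1 1 (α1 + α2 - 1) (β1 + β2 - 1) <;>
            first | omega | (simp [Pt]; omega) | (simp [Pt])
  -- (B,B)
  · by_cases hA2 : α1 + α2 = 2
    · apply K 1 0 (α1 + α2 - 1) (β1 + β2) <;>
        first | omega | (simp [Pt]; omega) | (simp [Pt])
    · apply K 1 1 (α1 + α2 - 1) (β1 + β2 - 1) <;>
        first | omega | (simp [Pt]; omega) | (simp [Pt])
  -- (B,C)
  · apply K 1 (β1 + β2 - 1) (α1 + α2 - 1) 1 <;>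
      first | omega | (simp [Pt]; omega) | (simp [Pt])
  -- (C,A)
  · apply K (α1 + α2 - 1) 1 1 (β1 + β2 - 1) <;>
      first | omega | (simp [Pt]; omega) | (simp [Pt])
  -- (C,B)
  · apply K 1 (β1 + β2 - 1) (α1 + α2 - 1) 1 <;>
      first | omega | (simp [Pt]; omega) | (simp [Pt])
  -- (C,C)
  · apply K 1 (β1 + β2 - 1) (α1 + α2 - 1) 1 <;>
      first | omega | (simp [Pt]; omega) | (simp [Pt])

/-- H2: a number `≤ ab+b` outside `SS` has no unique representation. -/
lemma no_unique (ha : 0 < a) (hab : a < b) (hcop : Nat.Coprime a b)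
    {m : ℕ} (hm : m ≤ a * b + b) (hnss : ¬ SS a b m) :
    ¬ ∃! p : ℕ × ℕ, RepS a b m p := by
  have hb : 0 < b := by omega
  rintro ⟨⟨x, y⟩, hrep, huniq⟩
  obtain ⟨h1, h2, hlt, ⟨α1, β1, hP1, rfl⟩, ⟨α2, β2, hP2, rfl⟩, hsum⟩ := hrep
  simp only at h1 h2 hlt hsum huniq
  have hvm : (α1 + α2) * a + (β1 + β2) * b = m := by
    have expand : (α1 + α2) * a + (β1 + β2) * b
        = (α1 * a + β1 * b) + (α2 * a + β2 * b) := by ring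
    rw [expand, hsum]
  have hne : ¬(α1 = α2 ∧ β1 = β2) := by
    rintro ⟨rfl, rfl⟩; exact absurd rfl hlt.ne
  have hnP : ¬ Pt (α1 + α2) (β1 + β2) := fun h => hnss ⟨_, _, h, hvm.symm⟩
  refine case_core hP1 hP2 hne hnP ?_
  intro γ1 δ1 γ2 δ2 hQ1 hQ2 hqne hsA hsB hf1 hf2
  have hw : (γ1 * a + δ1 * b) + (γ2 * a + δ2 * b) = m := by
    have expand : (γ1 * a + δ1 * b) + (γ2 * a + δ2 * b)
        = (γ1 + γ2) * a + (δ1 + δ2) * b := by ring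
    rw [expand, hsA, hsB, hvm]
  have hw1pos : 0 < γ1 * a + δ1 * b := val_pos ha hb hQ1
  have hw2pos : 0 < γ2 * a + δ2 * b := val_pos ha hb hQ2
  have hw1m : γ1 * a + δ1 * b < m := hw ▸ Nat.lt_add_of_pos_right hw2pos
  have hw2m : γ2 * a + δ2 * b < m := by
    rw [← hw]; exact Nat.lt_add_of_pos_left hw1pos
  have hw12 : γ1 * a + δ1 * b ≠ γ2 * a + δ2 * b := fun h =>
    hqne (inj ha hab hcop (le_trans hw1m.le hm) hQ1 hQ2 h)
  have hS1 : SS a b (γ1 * a + δ1 * b) := ⟨γ1, δ1, hQ1, rfl⟩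
  have hS2 : SS a b (γ2 * a + δ2 * b) := ⟨γ2, δ2, hQ2, rfl⟩
  rcases hw12.lt_or_gt with hord | hord
  · have heq := huniq (γ1 * a + δ1 * b, γ2 * a + δ2 * b)
      ⟨hw1m, hw2m, hord, hS1, hS2, hw⟩
    have hx : γ1 * a + δ1 * b = α1 * a + β1 * b := by
      have := congrArg Prod.fst heq
      simpa using this
    exact hf1 (inj ha hab hcop (le_trans hw1m.le hm) hQ1 hP1 hx)
  · have heq := huniq (γ2 * a + δ2 * b, γ1 * a + δ1 * b)
      ⟨hw2m, hw1m, hord, hS2, hS1, by omega⟩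
    have hx : γ1 * a + δ1 * b = α2 * a + β2 * b := by
      have := congrArg Prod.snd heq
      simpa using this
    exact hf2 (inj ha hab hcop (le_trans hw1m.le hm) hQ1 hP2 hx)

end Second

/-- Main characterization: below `ab + b`, the Ulam sequence `U(a,b)` is
exactly the set of numbers of the form `α·a + β·b` with `(α,β)` admissible. -/
lemma main_char {a b : ℕ} (ha : 0 < a) (hab : a < b) (hcop : Nat.Coprime a b)
    (m : ℕ) : m ≤ a * b + b → (UMem a b m ↔ SS a b m) := by
  induction m using Nat.strong_induction_on with
  | _ m IH =>
    intro hm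
    rw [UMem_eq]
    have hpair : ∀ p : ℕ × ℕ,
        (∃ _h1 : p.1 < m, ∃ _h2 : p.2 < m,
          p.1 < p.2 ∧ UMem a b p.1 ∧ UMem a b p.2 ∧ p.1 + p.2 = m) ↔
        RepS a b m p := by
      intro p
      constructor
      · rintro ⟨h1, h2, h3, h4, h5, h6⟩
        exact ⟨h1, h2, h3, (IH p.1 h1 (h1.le.trans hm)).mp h4,
          (IH p.2 h2 (h2.le.trans hm)).mp h5, h6⟩
      · rintro ⟨h1, h2, h3, h4, h5, h6⟩
        exact ⟨h1, h2, h3, (IH p.1 h1 (h1.le.trans hm)).mpr h4,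
          (IH p.2 h2 (h2.le.trans hm)).mpr h5, h6⟩
    constructor
    · rintro (rfl | rfl | hex)
      · exact ⟨1, 0, Or.inl rfl, by ring⟩
      · exact ⟨0, 1, Or.inr (Or.inl rfl), by ring⟩
      · by_contra hnss
        exact no_unique ha hab hcop hm hnss ((existsUnique_congr hpair).mp hex)
    · intro hss
      by_cases hma : m = a
      · exact Or.inl hma
      by_cases hmb : m = b
      · exact Or.inr (Or.inl hmb)
      refine Or.inr (Or.inr ?_)
      obtain ⟨α, β, hPt, hval⟩ := hss
      have hma' : ¬(α = 1 ∧ β = 0) := by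
        rintro ⟨rfl, rfl⟩
        exact hma (by omega)
      have hmb' : ¬(α = 0 ∧ β = 1) := by
        rintro ⟨rfl, rfl⟩
        exact hmb (by omega)
      exact (existsUnique_congr hpair).mpr
        (exists_unique_rep ha hab hcop hm hPt hval hma' hmb')

end Stmt16Aux

/-- For coprime positive a < b, both a(b+1) and b(a+1) lie in the Ulam
sequence U(a,b). -/
theorem stmt_16 (a b : ℕ) (ha : 0 < a) (hab : a < b) (hcop : Nat.Coprime a b) :
    UMem a b (a * (b + 1)) ∧ UMem a b (b * (a + 1)) := by
  constructor
  · refine (Stmt16Aux.main_char ha hab hcop (a * (b + 1)) ?_).mpr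
      ⟨1, a, Or.inl rfl, by ring⟩
    calc a * (b + 1) = a * b + a := by ring
      _ ≤ a * b + b := Nat.add_le_add_left hab.le _
  · refine (Stmt16Aux.main_char ha hab hcop (b * (a + 1)) ?_).mpr
      ⟨b, 1, Or.inr (Or.inl rfl), by ring⟩
    exact le_of_eq (by ring)
end

section
/- Let a < b be relatively prime positive integers and U = U(a,b) the Ulam sequence. For any c > (b+1)a, if c, c+a, c+2a, ..., c+ba all lie in U, then c+(b+1)a ∉ U. Similarly, for any c > (a+1)b, if c, c+b, ..., c+ab all lie in U, then c+(a+1)b ∉ U. In particular, U contains no b+2 terms in arithmetic progression of common difference a (beyond the initial segment), and no a+2 terms in arithmetic progression of common difference b. -/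
theorem umem_iff (a b m : ℕ) : UMem a b m ↔
    (m = a ∨ m = b ∨
      ∃! p : ℕ × ℕ, p.1 < m ∧ p.2 < m ∧
        p.1 < p.2 ∧ UMem a b p.1 ∧ UMem a b p.2 ∧ p.1 + p.2 = m) := by
  rw [UMem, Nat.strongRecOn_eq]
  constructor
  · rintro (h | h | h)
    · exact Or.inl h
    · exact Or.inr (Or.inl h)
    · refine Or.inr (Or.inr ?_)
      obtain ⟨p, ⟨h1, h2, h3, h4, h5, h6⟩, hu⟩ := h
      exact ⟨p, ⟨h1, h2, h3, h4, h5, h6⟩, fun q ⟨k1, k2, k3, k4, k5, k6⟩ =>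
        hu q ⟨k1, k2, k3, k4, k5, k6⟩⟩
  · rintro (h | h | h)
    · exact Or.inl h
    · exact Or.inr (Or.inl h)
    · refine Or.inr (Or.inr ?_)
      obtain ⟨p, ⟨h1, h2, h3, h4, h5, h6⟩, hu⟩ := h
      exact ⟨p, ⟨h1, h2, h3, h4, h5, h6⟩, fun q ⟨k1, k2, k3, k4, k5, k6⟩ =>
        hu q ⟨k1, k2, k3, k4, k5, k6⟩⟩

/-- the candidate description of `U(a,b) ∩ [0, ab+b]` -/
def Tset (a b n : ℕ) : Prop :=
  ∃ α β : ℕ, ((α = 1 ∧ β ≤ a) ∨ (β = 1 ∧ α ≤ b) ∨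
      (Odd α ∧ Odd β ∧ 3 ≤ α ∧ 3 ≤ β)) ∧ n = α * a + β * b

/-- sorted pair -/
def mkp (u v : ℕ) : ℕ × ℕ := if u ≤ v then (u, v) else (v, u)

lemma mkp_comm (u v : ℕ) : mkp u v = mkp v u := by
  unfold mkp; split_ifs with h1 h2 h2
  · exact Prod.ext (le_antisymm h1 h2) (le_antisymm h2 h1)
  · rfl
  · rfl
  · exact absurd (le_of_not_ge h1) h2

lemma mkp_cases (u v : ℕ) : mkp u v = (u, v) ∨ mkp u v = (v, u) := by
  unfold mkp; split_ifs <;> simp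

lemma mkp_eq_imp {u v u' v' : ℕ} (h : mkp u v = mkp u' v') : u' = u ∨ u' = v := by
  rcases mkp_cases u v with h1 | h1 <;> rcases mkp_cases u' v' with h2 | h2 <;>
    rw [h1, h2] at h <;> cases h <;> simp_all <;> omega

lemma mkp_of_sorted {u v : ℕ} {p : ℕ × ℕ} (hs : p.1 < p.2)
    (h1 : p.1 = u) (h2 : p.2 = v) : p = mkp u v := by
  have : mkp u v = (u, v) := by unfold mkp; rw [if_pos (by omega)]
  rw [this]; exact Prod.ext h1 h2

lemma mkp_of_sorted' {u v : ℕ} {p : ℕ × ℕ} (hs : p.1 < p.2)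
    (h1 : p.1 = v) (h2 : p.2 = u) : p = mkp u v := by
  rw [mkp_comm]; exact mkp_of_sorted hs h1 h2

section Main

variable {a b : ℕ}

/-- box-uniqueness of representations: auxiliary version with t ≤ t' -/
lemma H1aux (ha : 0 < a) (hcop : Nat.Coprime a b) (s t s' t' : ℕ) (h : s * a + t * b = s' * a + t' * b)
    (h1 : 1 ≤ t) (h2 : t' ≤ a) (hle : t ≤ t') : s = s' ∧ t = t' := by
  obtain ⟨d, rfl⟩ : ∃ d, t' = t + d := ⟨t' - t, by omega⟩
  have e1 : (t + d) * b = t * b + d * b := by ring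
  have h2' : s * a = s' * a + d * b := by
    rw [e1] at h; omega
  have hss : s' * a ≤ s * a := by omega
  have hs'le : s' ≤ s := Nat.le_of_mul_le_mul_right hss ha
  obtain ⟨e, rfl⟩ : ∃ e, s = s' + e := ⟨s - s', by omega⟩
  have e2 : (s' + e) * a = s' * a + e * a := by ring
  have h3 : e * a = d * b := by rw [e2] at h2'; omega
  have hdvd : a ∣ d * b := ⟨e, by rw [← h3]; ring⟩
  have hd : a ∣ d := (Nat.Coprime.dvd_of_dvd_mul_right hcop) hdvd
  have hd0 : d = 0 := by
    rcases Nat.eq_zero_or_pos d with h | h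
    · exact h
    · exact absurd (Nat.le_of_dvd h hd) (by omega)
  subst hd0
  have : e * a = 0 := by omega
  have he : e = 0 := by
    rcases Nat.eq_zero_or_pos e with h | h
    · exact h
    · nlinarith
  omega

lemma H1 (ha : 0 < a) (hcop : Nat.Coprime a b) (s t s' t' : ℕ) (h : s * a + t * b = s' * a + t' * b)
    (h1 : 1 ≤ t) (h1' : 1 ≤ t') (h2 : t ≤ a) (h2' : t' ≤ a) : s = s' ∧ t = t' := by
  rcases le_total t t' with hle | hle
  · exact H1aux ha hcop s t s' t' h h1 h2' hle
  · obtain ⟨hs, ht⟩ := H1aux ha hcop s' t' s t h.symm h1' h2 hle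
    exact ⟨hs.symm, ht.symm⟩

lemma boundS (ha : 0 < a) {s t n : ℕ} (hn : n ≤ a * b + b) (heq : n = s * a + t * b)
    (ht : 1 ≤ t) : s ≤ b := by
  have h1 : b ≤ t * b := Nat.le_mul_of_pos_left b ht
  have h2 : s * a ≤ a * b := by omega
  have h3 : s * a ≤ b * a := by rw [mul_comm b a]; exact h2
  exact Nat.le_of_mul_le_mul_right h3 ha

lemma boundT (ha : 0 < a) {s t n : ℕ} (hn : n ≤ a * b + b) (heq : n = s * a + t * b)
    (hs : 1 ≤ s) : t ≤ a := by
  have h1 : a ≤ s * a := Nat.le_mul_of_pos_left a hs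
  have h2 : t * b < (a + 1) * b := by
    have e : (a+1) * b = a * b + b := by ring
    omega
  have := lt_of_mul_lt_mul_right h2 (Nat.zero_le b)
  omega

end Main
section Main2

variable {a b : ℕ}

lemma tsetA (hβ : β ≤ a) : Tset a b (a + β * b) := ⟨1, β, Or.inl ⟨rfl, hβ⟩, by ring⟩

lemma tsetB (hα : α ≤ b) : Tset a b (α * a + b) := ⟨α, 1, Or.inr (Or.inl ⟨rfl, hα⟩), by ring⟩

lemma tsetO (h1 : Odd α) (h2 : Odd β) (h3 : 3 ≤ α) (h4 : 3 ≤ β) :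
    Tset a b (α * a + β * b) := ⟨α, β, Or.inr (Or.inr ⟨h1, h2, h3, h4⟩), rfl⟩

lemma tset_a : Tset a b a := ⟨1, 0, Or.inl ⟨rfl, Nat.zero_le a⟩, by ring⟩

lemma tset_b : Tset a b b := ⟨0, 1, Or.inr (Or.inl ⟨rfl, Nat.zero_le b⟩), by ring⟩

/-- the representation condition -/
def Rp (a b n : ℕ) (p : ℕ × ℕ) : Prop :=
  p.1 < n ∧ p.2 < n ∧ p.1 < p.2 ∧ Tset a b p.1 ∧ Tset a b p.2 ∧ p.1 + p.2 = n

lemma Rp_mkp {n u v : ℕ} (hne : u ≠ v) (hu : 0 < u) (hv : 0 < v)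
    (hTu : Tset a b u) (hTv : Tset a b v) (hsum : u + v = n) : Rp a b n (mkp u v) := by
  rcases Nat.lt_or_ge u v with h | h
  · have e : mkp u v = (u, v) := by unfold mkp; rw [if_pos (le_of_lt h)]
    rw [e]; exact ⟨by omega, by omega, h, hTu, hTv, hsum⟩
  · have hlt : v < u := lt_of_le_of_ne h (Ne.symm hne)
    have e : mkp u v = (v, u) := by unfold mkp; rw [if_neg (by omega)]
    rw [e]; exact ⟨by omega, by omega, hlt, hTv, hTu, by omega⟩

/-- from a valid pair, extract presentations with bounds on coordinate sums -/
lemma pair_pres (ha : 0 < a) {n : ℕ} (hn : n ≤ a * b + b) {p : ℕ × ℕ}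
    (hp : Rp a b n p) :
    ∃ α₁ β₁ α₂ β₂ : ℕ,
      ((α₁ = 1 ∧ β₁ ≤ a) ∨ (β₁ = 1 ∧ α₁ ≤ b) ∨ (Odd α₁ ∧ Odd β₁ ∧ 3 ≤ α₁ ∧ 3 ≤ β₁)) ∧
      ((α₂ = 1 ∧ β₂ ≤ a) ∨ (β₂ = 1 ∧ α₂ ≤ b) ∨ (Odd α₂ ∧ Odd β₂ ∧ 3 ≤ α₂ ∧ 3 ≤ β₂)) ∧
      p.1 = α₁ * a + β₁ * b ∧ p.2 = α₂ * a + β₂ * b ∧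
      n = (α₁ + α₂) * a + (β₁ + β₂) * b ∧
      1 ≤ α₁ + α₂ ∧ α₁ + α₂ ≤ b ∧ 1 ≤ β₁ + β₂ ∧ β₁ + β₂ ≤ a := by
  obtain ⟨h1, h2, hsort, hT1, hT2, hsum⟩ := hp
  obtain ⟨α₁, β₁, hP1, hx⟩ := hT1
  obtain ⟨α₂, β₂, hP2, hy⟩ := hT2
  have hnsum : n = (α₁ + α₂) * a + (β₁ + β₂) * b := by
    rw [← hsum, hx, hy]; ring
  have hs1 : 1 ≤ α₁ + α₂ := by
    by_contra h
    have hα₁ : α₁ = 0 := by omega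
    have hα₂ : α₂ = 0 := by omega
    have e1 : p.1 = b := by
      rcases hP1 with ⟨h', _⟩ | ⟨h', _⟩ | ⟨_, _, h', _⟩
      · omega
      · rw [hx, hα₁, h']; ring
      · omega
    have e2 : p.2 = b := by
      rcases hP2 with ⟨h', _⟩ | ⟨h', _⟩ | ⟨_, _, h', _⟩
      · omega
      · rw [hy, hα₂, h']; ring
      · omega
    omega
  have ht1 : 1 ≤ β₁ + β₂ := by
    by_contra h
    have hβ₁ : β₁ = 0 := by omega
    have hβ₂ : β₂ = 0 := by omega
    have e1 : p.1 = a := by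
      rcases hP1 with ⟨h', _⟩ | ⟨h', _⟩ | ⟨_, _, _, h'⟩
      · rw [hx, hβ₁, h']; ring
      · omega
      · omega
    have e2 : p.2 = a := by
      rcases hP2 with ⟨h', _⟩ | ⟨h', _⟩ | ⟨_, _, _, h'⟩
      · rw [hy, hβ₂, h']; ring
      · omega
      · omega
    omega
  exact ⟨α₁, β₁, α₂, β₂, hP1, hP2, hx, hy, hnsum, hs1,
    boundS ha hn hnsum ht1, ht1, boundT ha hn hnsum hs1⟩

end Main2
section Main3

variable {a b : ℕ}

/-- any valid pair is the canonical one, when n has coordinates (s,t) of one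
of the three "member" shapes -/
lemma pair_determined (ha : 0 < a) (hab : a < b) (hcop : Nat.Coprime a b)
    {n s t : ℕ} (hn : n ≤ a * b + b) (hnst : n = s * a + t * b)
    (hs1 : 1 ≤ s) (hsb : s ≤ b) (ht1 : 1 ≤ t) (hta : t ≤ a)
    (Hst : s = 1 ∨ t = 1 ∨ (Odd s ∧ Odd t ∧ 3 ≤ s ∧ 3 ≤ t))
    {p : ℕ × ℕ} (hp : Rp a b n p) :
    p = mkp (a + (t - 1) * b) ((s - 1) * a + b) := by
  have hsort : p.1 < p.2 := hp.2.2.1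
  obtain ⟨α₁, β₁, α₂, β₂, hP1, hP2, hx, hy, hnsum, hs1', hsb', ht1', hta'⟩ :=
    pair_pres ha hn hp
  obtain ⟨hseq, hteq⟩ := H1 ha hcop (α₁ + α₂) (β₁ + β₂) s t
    (by rw [← hnsum, ← hnst]) ht1' ht1 hta' hta
  rcases hP1 with ⟨e1, f1⟩ | ⟨e1, f1⟩ | ⟨o1, o1', g1, g1'⟩ <;>
    rcases hP2 with ⟨e2, f2⟩ | ⟨e2, f2⟩ | ⟨o2, o2', g2, g2'⟩
  · -- c1 c1 : s = 2
    rcases Hst with h | h | ⟨hos, hot, h3s, h3t⟩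
    · omega
    · -- t = 1 : β₁ + β₂ = 1
      subst h
      rcases (by omega : β₁ = 0 ∧ β₂ = 1 ∨ β₁ = 1 ∧ β₂ = 0) with ⟨hb1, hb2⟩ | ⟨hb1, hb2⟩
      · refine mkp_of_sorted hsort ?_ ?_
        · rw [hx, e1, hb1]; have e : (1:ℕ) - 1 = 0 := rfl; rw [e]; ring
        · rw [hy, e2, hb2]; have e : s - 1 = 1 := by omega
          rw [e]; ring
      · rw [e1, hb1] at hx; rw [e2, hb2] at hy; rw [hx, hy] at hsort; omega
    · rw [Nat.odd_iff] at hos; omega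
  · -- c1 c2 : canonical order
    refine mkp_of_sorted hsort ?_ ?_
    · rw [hx, e1]; have e : t - 1 = β₁ := by omega
      rw [e]; ring
    · rw [hy, e2]; have e : s - 1 = α₂ := by omega
      rw [e]; ring
  · -- c1 c3 : impossible
    rcases Hst with h | h | ⟨hos, hot, h3s, h3t⟩
    · omega
    · omega
    · rw [Nat.odd_iff] at hos o2; omega
  · -- c2 c1 : swapped order
    refine mkp_of_sorted' hsort ?_ ?_
    · rw [hx, e1]; have e : s - 1 = α₁ := by omega
      rw [e]; ring
    · rw [hy, e2]; have e : t - 1 = β₂ := by omega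
      rw [e]; ring
  · -- c2 c2 : t = 2
    rcases Hst with h | h | ⟨hos, hot, h3s, h3t⟩
    · -- s = 1 : α₁ + α₂ = 1
      subst h
      rcases (by omega : α₁ = 0 ∧ α₂ = 1 ∨ α₁ = 1 ∧ α₂ = 0) with ⟨hb1, hb2⟩ | ⟨hb1, hb2⟩
      · refine mkp_of_sorted' hsort ?_ ?_
        · rw [hx, e1, hb1]; have e : (1:ℕ) - 1 = 0 := rfl; rw [e]; ring
        · rw [hy, e2, hb2]; have e : t - 1 = 1 := by omega
          rw [e]; ring
      · rw [hb1, e1] at hx; rw [hb2, e2] at hy; rw [hx, hy] at hsort; omega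
    · omega
    · rw [Nat.odd_iff] at hot; omega
  · -- c2 c3 : impossible
    rcases Hst with h | h | ⟨hos, hot, h3s, h3t⟩
    · omega
    · omega
    · rw [Nat.odd_iff] at hot o2'; omega
  · -- c3 c1 : impossible
    rcases Hst with h | h | ⟨hos, hot, h3s, h3t⟩
    · omega
    · omega
    · rw [Nat.odd_iff] at hos o1; omega
  · -- c3 c2 : impossible
    rcases Hst with h | h | ⟨hos, hot, h3s, h3t⟩
    · omega
    · omega
    · rw [Nat.odd_iff] at hot o1'; omega
  · -- c3 c3 : impossible
    rcases Hst with h | h | ⟨hos, hot, h3s, h3t⟩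
    · omega
    · omega
    · rw [Nat.odd_iff] at hos o1 o2; omega

/-- the canonical pair is valid -/
lemma Rp_canon (ha : 0 < a) (hab : a < b) (hcop : Nat.Coprime a b)
    {n s t : ℕ} (hn : n ≤ a * b + b) (hnst : n = s * a + t * b)
    (hs1 : 1 ≤ s) (hsb : s ≤ b) (ht1 : 1 ≤ t) (hta : t ≤ a)
    (Hst : s = 1 ∨ t = 1 ∨ (Odd s ∧ Odd t ∧ 3 ≤ s ∧ 3 ≤ t)) :
    Rp a b n (mkp (a + (t - 1) * b) ((s - 1) * a + b)) := by
  have hb : 0 < b := by omega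
  apply Rp_mkp
  · -- distinct
    intro heq
    rcases Hst with h | h | ⟨hos, hot, h3s, h3t⟩
    · subst h
      simp only [Nat.sub_self, zero_mul, zero_add] at heq
      rcases Nat.eq_zero_or_pos (t - 1) with h0 | h0
      · rw [h0] at heq; simp at heq; omega
      · have h1 : b ≤ (t - 1) * b := Nat.le_mul_of_pos_left b h0
        omega
    · subst h
      simp only [Nat.sub_self, zero_mul, add_zero] at heq
      rcases Nat.eq_zero_or_pos (s - 1) with h0 | h0
      · rw [h0] at heq; simp at heq; omega
      · have h1 : a ≤ (s - 1) * a := Nat.le_mul_of_pos_left a h0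
        omega
    · have heq' : 1 * a + (t - 1) * b = (s - 1) * a + 1 * b := by
        rw [one_mul, one_mul]; exact heq
      obtain ⟨u1, u2⟩ := H1 ha hcop 1 (t - 1) (s - 1) 1 heq'
        (by omega) (by omega) (by omega) (by omega)
      omega
  · omega
  · rcases Nat.eq_zero_or_pos ((s - 1) * a) with h0 | h0 <;> omega
  · exact tsetA (by omega)
  · exact tsetB (by omega)
  · rw [hnst]
    have e1 : (t - 1) * b + 1 * b = (t - 1 + 1) * b := (add_mul _ _ _).symm
    have e2 : (s - 1) * a + 1 * a = (s - 1 + 1) * a := (add_mul _ _ _).symm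
    have e3 : t - 1 + 1 = t := by omega
    have e4 : s - 1 + 1 = s := by omega
    rw [e3] at e1; rw [e4] at e2
    omega

end Main3
section Main4

variable {a b : ℕ}

lemma key (ha : 0 < a) (hab : a < b) (hcop : Nat.Coprime a b) (n : ℕ)
    (hn : n ≤ a * b + b) :
    (n = a ∨ n = b ∨ ∃! p : ℕ × ℕ, Rp a b n p) ↔ Tset a b n := by
  constructor
  · rintro (rfl | rfl | ⟨p, hp, huniq⟩)
    · exact tset_a
    · exact tset_b
    · obtain ⟨s, t, hnst, hs1, hsb, ht1, hta⟩ :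
          ∃ s t : ℕ, n = s * a + t * b ∧ 1 ≤ s ∧ s ≤ b ∧ 1 ≤ t ∧ t ≤ a := by
        obtain ⟨α₁, β₁, α₂, β₂, _, _, _, _, hnsum, h1, h2, h3, h4⟩ := pair_pres ha hn hp
        exact ⟨_, _, hnsum, h1, h2, h3, h4⟩
      by_cases hseq1 : s = 1
      · exact ⟨1, t, Or.inl ⟨rfl, hta⟩, by rw [hnst, hseq1]⟩
      by_cases hteq1 : t = 1
      · exact ⟨s, 1, Or.inr (Or.inl ⟨rfl, hsb⟩), by rw [hnst, hteq1]⟩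
      by_cases hs2' : s = 2
      · subst hs2'
        by_cases ht2' : t = 2
        · -- case (i) : n = 2a + 2b
          subst ht2'
          exfalso
          have hP₁ : Rp a b n (mkp a (a + 2 * b)) :=
            Rp_mkp (by omega) ha (by omega) tset_a (tsetA (by omega))
              (by rw [hnst]; omega)
          have hP₂ : Rp a b n (mkp b (2 * a + b)) :=
            Rp_mkp (by omega) (by omega) (by omega) tset_b (tsetB (by omega))
              (by rw [hnst]; omega)
          have e := (huniq _ hP₁).trans (huniq _ hP₂).symm
          rcases mkp_eq_imp e with h | h <;> omega
        · -- case (ii) : s = 2, t ≥ 3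
          exfalso
          have ht3 : 3 ≤ t := by omega
          have hb1 : b ≤ t * b := Nat.le_mul_of_pos_left b (by omega)
          have hb3 : 3 * b ≤ t * b := Nat.mul_le_mul_right b ht3
          have hb2' : 2 * b ≤ (t - 1) * b := Nat.mul_le_mul_right b (by omega)
          have k1 : (t - 1) * b + 1 * b = t * b := by rw [← add_mul]; congr 1; omega
          have hP₁ : Rp a b n (mkp a (a + t * b)) :=
            Rp_mkp (by omega) ha (by omega) tset_a (tsetA hta) (by rw [hnst]; omega)
          have hP₂ : Rp a b n (mkp (a + b) (a + (t - 1) * b)) :=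
            Rp_mkp (by omega) (by omega) (by omega)
              (by simpa using tsetA (b := b) (show 1 ≤ a from ha))
              (tsetA (by omega)) (by rw [hnst]; omega)
          have e := (huniq _ hP₁).trans (huniq _ hP₂).symm
          rcases mkp_eq_imp e with h | h <;> omega
      by_cases ht2' : t = 2
      · -- case (iii) : s ≥ 3, t = 2
        subst ht2'
        exfalso
        have hs3 : 3 ≤ s := by omega
        have ha1 : a ≤ s * a := Nat.le_mul_of_pos_left a (by omega)
        have ha3 : 3 * a ≤ s * a := Nat.mul_le_mul_right a hs3
        have ha2' : 2 * a ≤ (s - 1) * a := Nat.mul_le_mul_right a (by omega)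
        have k2 : (s - 1) * a + 1 * a = s * a := by rw [← add_mul]; congr 1; omega
        have hP₁ : Rp a b n (mkp b (s * a + b)) :=
          Rp_mkp (by omega) (by omega) (by omega) tset_b (tsetB hsb)
            (by rw [hnst]; omega)
        have hP₂ : Rp a b n (mkp (a + b) ((s - 1) * a + b)) :=
          Rp_mkp (by omega) (by omega) (by omega)
            (by simpa using tsetA (b := b) (show 1 ≤ a from ha))
            (tsetB (by omega)) (by rw [hnst]; omega)
        have e := (huniq _ hP₁).trans (huniq _ hP₂).symm
        rcases mkp_eq_imp e with h | h <;> omega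
      -- now s, t ≥ 3
      have hs3 : 3 ≤ s := by omega
      have ht3 : 3 ≤ t := by omega
      have ha3 : 3 ≤ a := by omega
      have k1 : (t - 1) * b + 1 * b = t * b := by rw [← add_mul]; congr 1; omega
      have k2 : (s - 1) * a + 1 * a = s * a := by rw [← add_mul]; congr 1; omega
      have hneAB : a + (t - 1) * b ≠ (s - 1) * a + b := by
        intro h
        obtain ⟨u1, u2⟩ := H1 ha hcop 1 (t - 1) (s - 1) 1
          (by rw [one_mul, one_mul]; exact h) (by omega) (by omega) (by omega) (by omega)
        omega
      have hP₁ : Rp a b n (mkp (a + (t - 1) * b) ((s - 1) * a + b)) :=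
        Rp_mkp hneAB (by omega) (by omega) (tsetA (by omega)) (tsetB (by omega))
          (by rw [hnst]; omega)
      rcases Nat.even_or_odd s with hes | hos
      · -- case (iv) : s even ≥ 4
        exfalso
        rw [Nat.even_iff] at hes
        have hs4 : 4 ≤ s := by omega
        have k3 : (t - 3) * b + 3 * b = t * b := by rw [← add_mul]; congr 1; omega
        have hodd : Odd (s - 1) := by rw [Nat.odd_iff]; omega
        have hneAO : a + (t - 3) * b ≠ (s - 1) * a + 3 * b := by
          intro h
          rcases (by omega : t = 3 ∨ 4 ≤ t) with h3 | h4
          · have e0 : (t - 3) * b = 0 := by rw [h3]; simp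
            have e5 : 1 * a ≤ (s - 1) * a := Nat.mul_le_mul_right a (by omega)
            omega
          · obtain ⟨u1, u2⟩ := H1 ha hcop 1 (t - 3) (s - 1) 3
              (by rw [one_mul]; exact h) (by omega) (by omega) (by omega) (by omega)
            omega
        have hP₂ : Rp a b n (mkp (a + (t - 3) * b) ((s - 1) * a + 3 * b)) :=
          Rp_mkp hneAO (by omega) (by omega) (tsetA (by omega))
            (tsetO hodd (Nat.odd_iff.mpr rfl) (by omega) (by omega))
            (by rw [hnst]; omega)
        have e := (huniq _ hP₁).trans (huniq _ hP₂).symm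
        rcases mkp_eq_imp e with h | h
        · have e6 : (t - 3) * b + 2 * b = (t - 1) * b := by rw [← add_mul]; congr 1; omega
          omega
        · rcases (by omega : t = 3 ∨ 4 ≤ t) with h3 | h4
          · have e0 : (t - 3) * b = 0 := by rw [h3]; simp
            have e5 : 1 * a ≤ (s - 1) * a := Nat.mul_le_mul_right a (by omega)
            omega
          · obtain ⟨u1, u2⟩ := H1 ha hcop 1 (t - 3) (s - 1) 1
              (by rw [one_mul, one_mul]; exact h) (by omega) (by omega) (by omega) (by omega)
            omega
      rcases Nat.even_or_odd t with het | hot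
      · -- case (v) : s odd ≥ 3, t even ≥ 4
        exfalso
        rw [Nat.even_iff] at het
        rw [Nat.odd_iff] at hos
        have ht4 : 4 ≤ t := by omega
        have k4 : (s - 3) * a + 3 * a = s * a := by rw [← add_mul]; congr 1; omega
        have hoddt : Odd (t - 1) := by rw [Nat.odd_iff]; omega
        have hneBO : (s - 3) * a + b ≠ 3 * a + (t - 1) * b := by
          intro h
          obtain ⟨u1, u2⟩ := H1 ha hcop (s - 3) 1 3 (t - 1)
            (by rw [one_mul]; exact h) (by omega) (by omega) (by omega) (by omega)
          omega
        have hP₂ : Rp a b n (mkp ((s - 3) * a + b) (3 * a + (t - 1) * b)) :=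
          Rp_mkp hneBO (by omega) (by omega) (tsetB (by omega))
            (tsetO (Nat.odd_iff.mpr rfl) hoddt (le_refl 3) (by omega))
            (by rw [hnst]; omega)
        have e := (huniq _ hP₁).trans (huniq _ hP₂).symm
        rcases mkp_eq_imp e with h | h
        · obtain ⟨u1, u2⟩ := H1 ha hcop (s - 3) 1 1 (t - 1)
            (by rw [one_mul, one_mul]; exact h) (by omega) (by omega) (by omega) (by omega)
          omega
        · have e6 : (s - 3) * a + 2 * a = (s - 1) * a := by rw [← add_mul]; congr 1; omega
          omega
      · -- both odd : member
        exact ⟨s, t, Or.inr (Or.inr ⟨hos, hot, hs3, ht3⟩), hnst⟩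
  · rintro ⟨α, β, hP, rfl⟩
    rcases hP with ⟨rfl, hβ⟩ | ⟨rfl, hα⟩ | ⟨ho1, ho2, h3, h4⟩
    · rcases Nat.eq_zero_or_pos β with h0 | h0
      · left; rw [h0]; omega
      · right; right
        exact ⟨_, Rp_canon ha hab hcop hn rfl le_rfl (by omega) h0 hβ (Or.inl rfl),
          fun q hq => pair_determined ha hab hcop hn rfl le_rfl (by omega) h0 hβ
            (Or.inl rfl) hq⟩
    · rcases Nat.eq_zero_or_pos α with h0 | h0
      · right; left; rw [h0]; omega
      · right; right
        exact ⟨_, Rp_canon ha hab hcop hn rfl h0 hα le_rfl (by omega)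
            (Or.inr (Or.inl rfl)),
          fun q hq => pair_determined ha hab hcop hn rfl h0 hα le_rfl (by omega)
            (Or.inr (Or.inl rfl)) hq⟩
    · right; right
      have hsb : α ≤ b := boundS ha hn rfl (by omega)
      have hta : β ≤ a := boundT ha hn rfl (by omega)
      exact ⟨_, Rp_canon ha hab hcop hn rfl (by omega) hsb (by omega) hta
          (Or.inr (Or.inr ⟨ho1, ho2, h3, h4⟩)),
        fun q hq => pair_determined ha hab hcop hn rfl (by omega) hsb (by omega) hta
          (Or.inr (Or.inr ⟨ho1, ho2, h3, h4⟩)) hq⟩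

end Main4
section Main5

variable {a b : ℕ}

lemma main_char (ha : 0 < a) (hab : a < b) (hcop : Nat.Coprime a b) :
    ∀ n : ℕ, n ≤ a * b + b → (UMem a b n ↔ Tset a b n) := by
  intro n
  induction n using Nat.strong_induction_on with
  | _ n IH =>
    intro hn
    have body : ∀ p : ℕ × ℕ,
        (p.1 < n ∧ p.2 < n ∧ p.1 < p.2 ∧ UMem a b p.1 ∧ UMem a b p.2 ∧ p.1 + p.2 = n)
          ↔ Rp a b n p := by
      intro p
      constructor
      · rintro ⟨h1, h2, h3, h4, h5, h6⟩
        exact ⟨h1, h2, h3, (IH p.1 h1 (by omega)).mp h4, (IH p.2 h2 (by omega)).mp h5, h6⟩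
      · rintro ⟨h1, h2, h3, h4, h5, h6⟩
        exact ⟨h1, h2, h3, (IH p.1 h1 (by omega)).mpr h4, (IH p.2 h2 (by omega)).mpr h5, h6⟩
    rw [umem_iff, existsUnique_congr body]
    exact key ha hab hcop n hn

end Main5

/-- No b+2 terms of U(a,b) lie in arithmetic progression of common difference
a (past (b+1)a), and no a+2 terms in arithmetic progression of common
difference b (past (a+1)b). -/
theorem stmt_17 (a b : ℕ) (ha : 0 < a) (hab : a < b) (hcop : Nat.Coprime a b) :
    (∀ c : ℕ, (b + 1) * a < c → (∀ j : ℕ, j ≤ b → UMem a b (c + j * a)) →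
      ¬ UMem a b (c + (b + 1) * a)) ∧
    (∀ c : ℕ, (a + 1) * b < c → (∀ j : ℕ, j ≤ a → UMem a b (c + j * b)) →
      ¬ UMem a b (c + (a + 1) * b)) := by
  have hb : 0 < b := by omega
  have hab0 : 0 < a * b := Nat.mul_pos ha hb
  constructor
  · intro c hc hAP hU
    have e0 : (b + 1) * a = a * b + a := by ring
    have e00 : b * a = a * b := mul_comm b a
    have e1 : a ≤ a * b + a := by omega
    have e2 : b < a * b + a := by
      have h5 : b * 1 ≤ b * a := Nat.mul_le_mul_left b ha
      omega
    rw [umem_iff] at hU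
    rcases hU with h | h | ⟨p, hp, huniq⟩
    · omega
    · omega
    · have hq₁ : (a, c + b * a).1 < c + (b + 1) * a ∧ (a, c + b * a).2 < c + (b + 1) * a ∧
          (a, c + b * a).1 < (a, c + b * a).2 ∧ UMem a b (a, c + b * a).1 ∧
          UMem a b (a, c + b * a).2 ∧ (a, c + b * a).1 + (a, c + b * a).2 = c + (b + 1) * a := by
        refine ⟨by simp; omega, by simp; omega, by simp; omega, ?_, ?_, by simp; omega⟩
        · exact (umem_iff a b a).mpr (Or.inl rfl)
        · exact hAP b le_rfl
      have hq₂ : (a * b + a, c).1 < c + (b + 1) * a ∧ (a * b + a, c).2 < c + (b + 1) * a ∧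
          (a * b + a, c).1 < (a * b + a, c).2 ∧ UMem a b (a * b + a, c).1 ∧
          UMem a b (a * b + a, c).2 ∧ (a * b + a, c).1 + (a * b + a, c).2 = c + (b + 1) * a := by
        refine ⟨by simp; omega, by simp; omega, by simp; omega, ?_, ?_, by simp; omega⟩
        · exact (main_char ha hab hcop (a * b + a) (by omega)).mpr
            ⟨1, a, Or.inl ⟨rfl, le_rfl⟩, by ring⟩
        · have := hAP 0 (Nat.zero_le b)
          simpa using this
      have e := (huniq _ hq₁).trans (huniq _ hq₂).symm
      have := congrArg Prod.fst e
      simp at this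
      omega
  · intro c hc hAP hU
    have e0 : (a + 1) * b = a * b + b := by ring
    have e00 : b * a = a * b := mul_comm b a
    have e1 : a < a * b + b := by omega
    have e2 : b ≤ a * b + b := by omega
    rw [umem_iff] at hU
    rcases hU with h | h | ⟨p, hp, huniq⟩
    · omega
    · omega
    · have hq₁ : (b, c + a * b).1 < c + (a + 1) * b ∧ (b, c + a * b).2 < c + (a + 1) * b ∧
          (b, c + a * b).1 < (b, c + a * b).2 ∧ UMem a b (b, c + a * b).1 ∧
          UMem a b (b, c + a * b).2 ∧ (b, c + a * b).1 + (b, c + a * b).2 = c + (a + 1) * b := by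
        refine ⟨by simp; omega, by simp; omega, by simp; omega, ?_, ?_, by simp; omega⟩
        · exact (umem_iff a b b).mpr (Or.inr (Or.inl rfl))
        · exact hAP a le_rfl
      have hq₂ : (a * b + b, c).1 < c + (a + 1) * b ∧ (a * b + b, c).2 < c + (a + 1) * b ∧
          (a * b + b, c).1 < (a * b + b, c).2 ∧ UMem a b (a * b + b, c).1 ∧
          UMem a b (a * b + b, c).2 ∧ (a * b + b, c).1 + (a * b + b, c).2 = c + (a + 1) * b := by
        refine ⟨by simp; omega, by simp; omega, by simp; omega, ?_, ?_, by simp; omega⟩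
        · exact (main_char ha hab hcop (a * b + b) le_rfl).mpr
            ⟨b, 1, Or.inr (Or.inl ⟨rfl, le_rfl⟩), by ring⟩
        · have := hAP 0 (Nat.zero_le a)
          simpa using this
      have e := (huniq _ hq₁).trans (huniq _ hq₂).symm
      have := congrArg Prod.fst e
      simp at this
      omega
end

section
/- The (2,1)-sequence Z_{(2,1)}(1,3), defined by starting with 1, 3 and repeatedly appending the smallest integer z greater than all previous terms such that z = 2x + y for a unique ordered pair of distinct earlier terms (x, y), equals {3, 15} ∪ {4k+1 : k ≥ 0} \ {9} = {1, 3, 5, 13, 15, 17, 21, 25, 29, ...}. -/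
def Z21Mem (a b : ℕ) : ℕ → Prop := fun m =>
  Nat.strongRecOn (motive := fun _ => Prop) m (fun m ih =>
    m = a ∨ m = b ∨
      ∃! p : ℕ × ℕ, ∃ h1 : p.1 < m, ∃ h2 : p.2 < m,
        p.1 ≠ p.2 ∧ ih p.1 h1 ∧ ih p.2 h2 ∧ 2 * p.1 + p.2 = m)

theorem Z21Mem_unfold (a b m : ℕ) : Z21Mem a b m ↔ (m = a ∨ m = b ∨
      ∃! p : ℕ × ℕ, ∃ _ : p.1 < m, ∃ _ : p.2 < m,
        p.1 ≠ p.2 ∧ Z21Mem a b p.1 ∧ Z21Mem a b p.2 ∧ 2 * p.1 + p.2 = m) :=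
  iff_of_eq (Nat.strongRecOn_eq _ m)

theorem Z21_key : ∀ m, Z21Mem 1 3 m ↔ ((m = 3 ∨ m = 15 ∨ m % 4 = 1) ∧ m ≠ 9) := by
  intro m
  induction m using Nat.strong_induction_on with
  | _ m ih =>
  rw [Z21Mem_unfold]
  constructor
  · rintro (rfl | rfl | ⟨⟨x, y⟩, ⟨hx, hy, hne, hzx, hzy, heq⟩, huniq⟩)
    · omega
    · omega
    · rw [ih x hx] at hzx
      rw [ih y hy] at hzy
      simp only at hne hzx hzy heq
      by_contra hQ
      have hm : (m ≠ 3 ∧ m ≠ 15 ∧ m % 4 ≠ 1) ∨ m = 9 := by omega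
      rcases hm with ⟨h3, h15, h1⟩ | rfl
      · -- if m % 4 ≠ 3 or m even: direct contradiction
        rcases eq_or_ne (m % 4) 3 with h4 | h4
        · -- two distinct pairs exist, contradicting uniqueness
          rcases eq_or_ne m 11 with rfl | h11
          · have e1 := huniq (3, 5) ⟨by omega, by omega, by omega,
              (ih 3 (by omega)).2 (by omega), (ih 5 (by omega)).2 (by omega), by omega⟩
            have e2 := huniq (5, 1) ⟨by omega, by omega, by omega,
              (ih 5 (by omega)).2 (by omega), (ih 1 (by omega)).2 (by omega), by omega⟩
            have := e1.trans e2.symm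
            simp [Prod.ext_iff] at this
          · have e1 := huniq (1, m - 2) ⟨by omega, by omega, by omega,
              (ih 1 (by omega)).2 (by omega), (ih (m - 2) (by omega)).2 (by omega), by omega⟩
            have e2 := huniq (3, m - 6) ⟨by omega, by omega, by omega,
              (ih 3 (by omega)).2 (by omega), (ih (m - 6) (by omega)).2 (by omega), by omega⟩
            have := e1.trans e2.symm
            simp [Prod.ext_iff] at this
        · omega
      · omega
  · rintro hQ
    rcases eq_or_ne m 1 with rfl | h1
    · exact Or.inl rfl
    rcases eq_or_ne m 3 with rfl | h3
    · exact Or.inr (Or.inl rfl)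
    refine Or.inr (Or.inr ?_)
    -- choose witness (u, v) by cases
    have build : ∀ u v : ℕ, ((u = 3 ∨ u = 15 ∨ u % 4 = 1) ∧ u ≠ 9) →
        ((v = 3 ∨ v = 15 ∨ v % 4 = 1) ∧ v ≠ 9) → u ≠ v → 2 * u + v = m →
        (∀ x y : ℕ, x ≠ y → ((x = 3 ∨ x = 15 ∨ x % 4 = 1) ∧ x ≠ 9) →
          ((y = 3 ∨ y = 15 ∨ y % 4 = 1) ∧ y ≠ 9) → 2 * x + y = m → x = u ∧ y = v) →
        ∃! p : ℕ × ℕ, ∃ _ : p.1 < m, ∃ _ : p.2 < m,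
          p.1 ≠ p.2 ∧ Z21Mem 1 3 p.1 ∧ Z21Mem 1 3 p.2 ∧ 2 * p.1 + p.2 = m := by
      intro u v hu hv huv heq hun
      refine ⟨(u, v), ⟨by omega, by omega, huv,
        (ih u (by omega)).2 hu, (ih v (by omega)).2 hv, heq⟩, ?_⟩
      rintro ⟨x, y⟩ ⟨hx, hy, hne, hzx, hzy, hxy⟩
      rw [ih x hx] at hzx
      rw [ih y hy] at hzy
      simp only at hne hzx hzy hxy ⊢
      have := hun x y hne hzx hzy hxy
      simp [Prod.ext_iff]
      omega
    rcases eq_or_ne m 15 with rfl | h15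
    · exact build 1 13 (by omega) (by omega) (by omega) (by omega)
        (by intro x y hne hx hy he; omega)
    rcases eq_or_ne m 5 with rfl | h5
    · exact build 1 3 (by omega) (by omega) (by omega) (by omega)
        (by intro x y hne hx hy he; omega)
    rcases eq_or_ne m 21 with rfl | h21
    · exact build 3 15 (by omega) (by omega) (by omega) (by omega)
        (by intro x y hne hx hy he; omega)
    rcases eq_or_ne m 33 with rfl | h33
    · exact build 15 3 (by omega) (by omega) (by omega) (by omega)
        (by intro x y hne hx hy he; omega)
    -- now m % 4 = 1, m ∉ {1,5,9,21,33}
    have hm1 : m % 4 = 1 := by omega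
    rcases eq_or_ne (m % 8) 5 with h8 | h8
    · exact build ((m - 3) / 2) 3 (by omega) (by omega) (by omega) (by omega)
        (by intro x y hne hx hy he; omega)
    · exact build ((m - 15) / 2) 15 (by omega) (by omega) (by omega) (by omega)
        (by intro x y hne hx hy he; omega)

/-- The (2,1)-sequence generated by 1 and 3 equals
{3, 15} ∪ {4k+1 : k ≥ 0} \ {9} = {1, 3, 5, 13, 15, 17, 21, 25, ...}. -/
theorem stmt_19 : {m : ℕ | Z21Mem 1 3 m} =
    ({3, 15} ∪ {m : ℕ | m % 4 = 1}) \ {9} := by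
  ext m
  simp only [Set.mem_setOf_eq, Z21_key, Set.mem_diff, Set.mem_union, Set.mem_insert_iff,
    Set.mem_singleton_iff]
  omega
end
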